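/- Let 𝒜 = ⟨Q, A, δ⟩ be an automaton with an independent set W with range R, and let M be the maximal cardinality of a reducible subset of R. For every non-empty reducible subset K of R, the following four conditions are equivalent: (1) Card(K) = M; (2) for all w ∈ W and all v ∈ A*, Card(K(vw)^{-1} ∩ R) ≤ Card(K); (3) for all w ∈ W and all v ∈ A*, Card(K(vw)^{-1} ∩ R) = Card(K); (4) K is a maximal reducible subset of R, i.e., every reducible subset of R containing K equals K. -/

import Mathlib

/-! Every word of `W` carries each state onto all of `R`, so summing the preimage counts
`Card(K (vw)⁻¹ ∩ R)` over `w ∈ W` gives `Card(W) · Card(K)`. A preimage of a reducible set is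
reducible, so when `Card(K) = M` every summand is at most `Card(K)`, hence all are equal; and a
reducible superset of `K` lies inside one of the summands, so it is no larger than `K`.
For maximality to force `Card(K) = M`, reduce `K` to a state `q` and pick `w ∈ W` sending `q`
into a reducible set `K₀` of cardinality `M`: the preimage of `K₀` under `uw` contains `K`, is
reducible, and has cardinality `M`. -/

/-- The extension of a transition function `δ : Q → A → Q` to words. -/
def run {Q A : Type*} (δ : Q → A → Q) (q : Q) (u : List A) : Q := u.foldl δ q

/-- `W` is an independent set of words with range `R`. -/
def IsIndependent {Q A : Type*} [DecidableEq Q] (δ : Q → A → Q)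
    (W : Finset (List A)) (R : Finset Q) : Prop :=
  W.card = R.card ∧ ∀ s : Q, W.image (fun w => run δ s w) = R

/-- A set of states `K` is reducible if some word maps it to a singleton. -/
def Reducible {Q A : Type*} [DecidableEq Q] (δ : Q → A → Q) (K : Finset Q) : Prop :=
  ∃ (v : List A) (q : Q), K.image (fun p => run δ p v) = {q}

section

variable {Q A : Type*} {δ : Q → A → Q}

lemma run_append (q : Q) (u v : List A) : run δ q (u ++ v) = run δ (run δ q u) v :=
  List.foldl_append

variable [DecidableEq Q]

lemma reducible_iff {K : Finset Q} :
    Reducible δ K ↔ K.Nonempty ∧ ∃ (v : List A) (q : Q), ∀ p ∈ K, run δ p v = q := by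
  simp only [Reducible, Finset.eq_singleton_iff_nonempty_unique_mem, Finset.image_nonempty,
    Finset.forall_mem_image]
  exact ⟨fun ⟨v, q, hK, h⟩ => ⟨hK, v, q, h⟩, fun ⟨hK, v, q, h⟩ => ⟨v, q, hK, h⟩⟩

lemma Reducible.nonempty {K : Finset Q} (hK : Reducible δ K) : K.Nonempty :=
  (reducible_iff.mp hK).1

lemma Reducible.of_run_mem {K S : Finset Q} (hK : Reducible δ K) (hS : S.Nonempty) (v : List A)
    (h : ∀ p ∈ S, run δ p v ∈ K) : Reducible δ S := by
  obtain ⟨-, u, q, hu⟩ := reducible_iff.mp hK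
  refine reducible_iff.mpr ⟨hS, v ++ u, q, fun p hp => ?_⟩
  rw [run_append, hu _ (h p hp)]

namespace IsIndependent

variable {W : Finset (List A)} {R : Finset Q}

lemma exists_run_eq (hW : IsIndependent δ W R) (s : Q) {r : Q} (hr : r ∈ R) :
    ∃ w ∈ W, run δ s w = r := by
  simpa [← hW.2 s] using hr

lemma card_filter_run_mem (hW : IsIndependent δ W R) (s : Q) {S : Finset Q} (hSR : S ⊆ R) :
    (W.filter (fun w => run δ s w ∈ S)).card = S.card := by
  have hinj : Set.InjOn (run δ s) W :=
    Finset.injOn_of_card_image_eq (by rw [hW.2 s, hW.1])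
  have himage : (W.filter (fun w => run δ s w ∈ S)).image (run δ s) = S := by
    rw [← Finset.filter_image (p := (· ∈ S)), hW.2 s, Finset.filter_mem_eq_inter,
      Finset.inter_eq_right.mpr hSR]
  conv_rhs => rw [← himage]
  exact (Finset.card_image_of_injOn (hinj.mono (Finset.filter_subset _ _))).symm

lemma sum_card_filter_run_append_mem (hW : IsIndependent δ W R) (v : List A) {S : Finset Q}
    (hSR : S ⊆ R) :
    ∑ w ∈ W, (R.filter (fun q => run δ q (v ++ w) ∈ S)).card = W.card * S.card := by
  have hcount : ∀ q ∈ R, (W.filter (fun w => run δ q (v ++ w) ∈ S)).card = S.card := by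
    intro q _
    simp only [run_append]
    exact hW.card_filter_run_mem _ hSR
  calc ∑ w ∈ W, (R.filter (fun q => run δ q (v ++ w) ∈ S)).card
      = ∑ q ∈ R, (W.filter (fun w => run δ q (v ++ w) ∈ S)).card :=
        (Finset.sum_card_bipartiteAbove_eq_sum_card_bipartiteBelow _).symm
    _ = W.card * S.card := by rw [Finset.sum_congr rfl hcount, Finset.sum_const, hW.1, smul_eq_mul]

lemma card_filter_run_append_mem_eq (hW : IsIndependent δ W R) (v : List A) {S : Finset Q}
    (hSR : S ⊆ R)
    (hle : ∀ w ∈ W, (R.filter (fun q => run δ q (v ++ w) ∈ S)).card ≤ S.card) :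
    ∀ w ∈ W, (R.filter (fun q => run δ q (v ++ w) ∈ S)).card = S.card := by
  refine (Finset.sum_eq_sum_iff_of_le hle).mp ?_
  rw [hW.sum_card_filter_run_append_mem v hSR, Finset.sum_const, smul_eq_mul]

end IsIndependent

variable {W : Finset (List A)} {R : Finset Q} {M : ℕ}

lemma card_filter_run_mem_le (hM : ∀ K ⊆ R, Reducible δ K → K.card ≤ M) {K : Finset Q}
    (hK : Reducible δ K) (v : List A) : (R.filter (fun q => run δ q v ∈ K)).card ≤ M := by
  rcases (R.filter (fun q => run δ q v ∈ K)).eq_empty_or_nonempty with hempty | hne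
  · simp [hempty]
  · exact hM _ (Finset.filter_subset _ _) <|
      hK.of_run_mem hne v fun q hq => (Finset.mem_filter.mp hq).2

lemma card_filter_run_append_mem_eq_of_card_eq (hW : IsIndependent δ W R)
    (hM : ∀ K ⊆ R, Reducible δ K → K.card ≤ M) {K : Finset Q} (hKR : K ⊆ R)
    (hK : Reducible δ K) (hcard : K.card = M) (w : List A) (hw : w ∈ W) (v : List A) :
    (R.filter (fun q => run δ q (v ++ w) ∈ K)).card = K.card :=
  hW.card_filter_run_append_mem_eq v hKR
    (fun w _ => hcard ▸ card_filter_run_mem_le hM hK (v ++ w)) w hw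

end

theorem stmt_2_general {Q A : Type*} [DecidableEq Q]
    (δ : Q → A → Q) (W : Finset (List A)) (R : Finset Q)
    (hW : IsIndependent δ W R) (M : ℕ)
    (hMub : ∀ K ⊆ R, Reducible δ K → K.card ≤ M)
    (hMmem : ∃ K ⊆ R, Reducible δ K ∧ K.card = M)
    (K : Finset Q) (hKR : K ⊆ R) (hKred : Reducible δ K) :
    List.TFAE
      [ K.card = M,
        ∀ w ∈ W, ∀ v : List A,
          (R.filter (fun q => run δ q (v ++ w) ∈ K)).card ≤ K.card,
        ∀ w ∈ W, ∀ v : List A,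
          (R.filter (fun q => run δ q (v ++ w) ∈ K)).card = K.card,
        ∀ K' ⊆ R, Reducible δ K' → K ⊆ K' → K' = K ] := by
  obtain ⟨hKne, u, q, hu⟩ := reducible_iff.mp hKred
  tfae_have 1 → 3 := card_filter_run_append_mem_eq_of_card_eq hW hMub hKR hKred
  tfae_have 3 → 2 := fun h w hw v => (h w hw v).le
  tfae_have 2 → 3 := fun h w hw v =>
    hW.card_filter_run_append_mem_eq v hKR (fun w' hw' => h w' hw' v) w hw
  tfae_have 3 → 4 := by
    intro h K' hK'R hK'red hKK'
    obtain ⟨-, u', q', hu'⟩ := reducible_iff.mp hK'red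
    obtain ⟨k, hk⟩ := hKne
    obtain ⟨w, hw, hwk⟩ := hW.exists_run_eq q' (hKR hk)
    have hK'sub : K' ⊆ R.filter (fun q => run δ q (u' ++ w) ∈ K) := fun p hp =>
      Finset.mem_filter.mpr ⟨hK'R hp, by rw [run_append, hu' p hp, hwk]; exact hk⟩
    exact (Finset.eq_of_subset_of_card_le hKK'
      ((Finset.card_le_card hK'sub).trans (h w hw u').le)).symm
  tfae_have 4 → 1 := by
    intro h
    obtain ⟨K₀, hK₀R, hK₀red, hK₀card⟩ := hMmem
    obtain ⟨k₀, hk₀⟩ := hK₀red.nonempty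
    obtain ⟨w, hw, hwk₀⟩ := hW.exists_run_eq q (hK₀R hk₀)
    have hKsub : K ⊆ R.filter (fun p => run δ p (u ++ w) ∈ K₀) := fun p hp =>
      Finset.mem_filter.mpr ⟨hKR hp, by rw [run_append, hu p hp, hwk₀]; exact hk₀⟩
    have hpre : R.filter (fun p => run δ p (u ++ w) ∈ K₀) = K :=
      h _ (Finset.filter_subset _ _)
        (hK₀red.of_run_mem (hKne.mono hKsub) _ fun p hp => (Finset.mem_filter.mp hp).2) hKsub
    rw [← hpre, card_filter_run_append_mem_eq_of_card_eq hW hMub hK₀R hK₀red hK₀card w hw u,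
      hK₀card]
  tfae_finish

/-- Characterization of maximal reducible subsets of the range `R`:
for a non-empty reducible `K ⊆ R`, the four listed conditions are equivalent. -/
theorem stmt_2 {Q A : Type*} [Fintype Q] [DecidableEq Q] [Fintype A]
    (δ : Q → A → Q) (W : Finset (List A)) (R : Finset Q)
    (hW : IsIndependent δ W R) (M : ℕ)
    (hMub : ∀ K ⊆ R, Reducible δ K → K.card ≤ M)
    (hMmem : ∃ K ⊆ R, Reducible δ K ∧ K.card = M)
    (K : Finset Q) (hKR : K ⊆ R) (hKne : K.Nonempty) (hKred : Reducible δ K) :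
    List.TFAE
      [ K.card = M,
        ∀ w ∈ W, ∀ v : List A,
          (R.filter (fun q => run δ q (v ++ w) ∈ K)).card ≤ K.card,
        ∀ w ∈ W, ∀ v : List A,
          (R.filter (fun q => run δ q (v ++ w) ∈ K)).card = K.card,
        ∀ K' ⊆ R, Reducible δ K' → K ⊆ K' → K' = K ] :=
  stmt_2_general δ W R hW M hMub hMmem K hKR hKred
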